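/- arXiv:2004.14100 — 3 statements merged into one kernel-verified Lean document; each statement's English description precedes it below -/
import Mathlib

section
/- Define f₊(δ₀) = (1 - 6δ₀ + 8δ₀² - 8δ₀³ + 4δ₀⁴ + √(1 - 8δ₀ + 16δ₀² - 48δ₀³ + 120δ₀⁴ - 160δ₀⁵ + 128δ₀⁶ - 64δ₀⁷ + 16δ₀⁸))/(2(δ₀ - 1)) for δ₀ > 1. Then f₊(δ₀) > 3 for all δ₀ > 1, and f₊(δ₀) → 3 as δ₀ → 1⁺. -/
open Filter Set

noncomputable def fPlusP (δ₀ : ℝ) : ℝ :=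
  (1 - 6 * δ₀ + 8 * δ₀ ^ 2 - 8 * δ₀ ^ 3 + 4 * δ₀ ^ 4 +
    Real.sqrt (1 - 8 * δ₀ + 16 * δ₀ ^ 2 - 48 * δ₀ ^ 3 + 120 * δ₀ ^ 4
      - 160 * δ₀ ^ 5 + 128 * δ₀ ^ 6 - 64 * δ₀ ^ 7 + 16 * δ₀ ^ 8)) /
  (2 * (δ₀ - 1))

/-- the radicand -/
noncomputable def myDp (δ : ℝ) : ℝ :=
  1 - 8 * δ + 16 * δ ^ 2 - 48 * δ ^ 3 + 120 * δ ^ 4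
      - 160 * δ ^ 5 + 128 * δ ^ 6 - 64 * δ ^ 7 + 16 * δ ^ 8

noncomputable def myAp (δ : ℝ) : ℝ := 4 * δ ^ 4 - 8 * δ ^ 3 + 8 * δ ^ 2 - 12 * δ + 7

noncomputable def myCp (δ : ℝ) : ℝ := 4 * δ ^ 3 - 4 * δ ^ 2 + 4 * δ - 3

lemma myKey (δ : ℝ) : myDp δ = myAp δ ^ 2 + 16 * (δ - 1) ^ 2 * myCp δ := by
  unfold myDp myAp myCp; ring

lemma myCpos {δ : ℝ} (h : 1 < δ) : 0 < myCp δ := by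
  unfold myCp; nlinarith

lemma myDgt {δ : ℝ} (h : 1 < δ) : myAp δ ^ 2 < myDp δ := by
  rw [myKey]
  have h1 := myCpos h
  have h2 : (0:ℝ) < (δ - 1) ^ 2 := pow_pos (by linarith) 2
  nlinarith [mul_pos h2 h1]

lemma mySgt {δ : ℝ} (h : 1 < δ) : |myAp δ| < Real.sqrt (myDp δ) := by
  have hD : (0:ℝ) ≤ myDp δ := le_of_lt (lt_of_le_of_lt (sq_nonneg _) (myDgt h))
  rw [show |myAp δ| = Real.sqrt ((myAp δ) ^ 2) by rw [Real.sqrt_sq_eq_abs]]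
  exact Real.sqrt_lt_sqrt (sq_nonneg _) (myDgt h)

lemma myF (δ : ℝ) :
    fPlusP δ = (myAp δ + 6 * (δ - 1) + Real.sqrt (myDp δ)) / (2 * (δ - 1)) := by
  unfold fPlusP myDp myAp
  ring_nf

lemma myG {δ : ℝ} (h : 1 < δ) :
    fPlusP δ = 3 + 8 * (δ - 1) * myCp δ / (Real.sqrt (myDp δ) - myAp δ) := by
  have hD : (0:ℝ) ≤ myDp δ := le_of_lt (lt_of_le_of_lt (sq_nonneg _) (myDgt h))
  set s := Real.sqrt (myDp δ) with hs
  have hs2 : s ^ 2 = myDp δ := Real.sq_sqrt hD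
  have hgt : |myAp δ| < s := mySgt h
  have hsub : 0 < s - myAp δ := by
    have := (abs_lt.mp hgt).2; linarith
  have hδ : δ - 1 ≠ 0 := by linarith [h]
  rw [myF]
  have hprod : (myAp δ + s) * (s - myAp δ) = 16 * (δ - 1) ^ 2 * myCp δ := by
    have := myKey δ
    nlinarith [hs2]
  field_simp
  nlinarith [hprod]

theorem stmt_7 :
    (∀ δ₀ : ℝ, 1 < δ₀ → fPlusP δ₀ > 3) ∧
    Tendsto fPlusP (nhdsWithin 1 (Ioi 1)) (nhds 3) := by
  constructor
  · intro δ h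
    rw [myG h]
    have h1 : 0 < 8 * (δ - 1) * myCp δ := by
      have := myCpos h; nlinarith
    have hgt : |myAp δ| < Real.sqrt (myDp δ) := mySgt h
    have h2 : 0 < Real.sqrt (myDp δ) - myAp δ := by
      have := (abs_lt.mp hgt).2; linarith
    have := div_pos h1 h2
    linarith
  · have hcont : ContinuousAt
        (fun δ : ℝ => 3 + 8 * (δ - 1) * myCp δ / (Real.sqrt (myDp δ) - myAp δ)) 1 := by
      have hden : ContinuousAt (fun δ : ℝ => Real.sqrt (myDp δ) - myAp δ) 1 := by
        apply ContinuousAt.sub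
        · exact Real.continuous_sqrt.continuousAt.comp (by unfold myDp; fun_prop)
        · unfold myAp; fun_prop
      have hne : Real.sqrt (myDp 1) - myAp 1 ≠ 0 := by
        have h1 : myDp 1 = 1 := by unfold myDp; norm_num
        have h2 : myAp 1 = -1 := by unfold myAp; norm_num
        rw [h1, h2, Real.sqrt_one]; norm_num
      apply ContinuousAt.add continuousAt_const
      apply ContinuousAt.div _ hden hne
      unfold myCp; fun_prop
    have hval : (3 : ℝ) + 8 * ((1:ℝ) - 1) * myCp 1 / (Real.sqrt (myDp 1) - myAp 1) = 3 := by
      simp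
    have h1 : Tendsto (fun δ : ℝ => 3 + 8 * (δ - 1) * myCp δ / (Real.sqrt (myDp δ) - myAp δ))
        (nhdsWithin 1 (Ioi 1)) (nhds 3) := by
      have := hcont.tendsto
      rw [hval] at this
      exact this.mono_left nhdsWithin_le_nhds
    apply h1.congr'
    filter_upwards [self_mem_nhdsWithin] with δ hδ
    exact (myG hδ).symm
end

section
/- For δ₀ > 1 and c ∈ [-1,1], the expression (c+1)(1-δ₀)(c - f₋(δ₀))(c - f₊(δ₀)) is nonnegative, where f₋ < -1 and f₊ > 3 are the two roots defined by f±(δ₀) = (1 - 6δ₀ + 8δ₀² - 8δ₀³ + 4δ₀⁴ ± √(1 - 8δ₀ + 16δ₀² - 48δ₀³ + 120δ₀⁴ - 160δ₀⁵ + 128δ₀⁶ - 64δ₀⁷ + 16δ₀⁸))/(2(δ₀-1)). -/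
noncomputable def fMinusP (δ₀ : ℝ) : ℝ :=
  (1 - 6 * δ₀ + 8 * δ₀ ^ 2 - 8 * δ₀ ^ 3 + 4 * δ₀ ^ 4 -
    Real.sqrt (1 - 8 * δ₀ + 16 * δ₀ ^ 2 - 48 * δ₀ ^ 3 + 120 * δ₀ ^ 4
      - 160 * δ₀ ^ 5 + 128 * δ₀ ^ 6 - 64 * δ₀ ^ 7 + 16 * δ₀ ^ 8)) /
  (2 * (δ₀ - 1))


/-!
Write `f±(δ₀) = (N ± √Δ) / (2a)` with `a = δ₀ - 1` and `N = 1 - 6δ₀ + 8δ₀² - 8δ₀³ + 4δ₀⁴`.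
The radicand `Δ` is the discriminant of `q(x) = a x² - N x + C` with
`C = δ₀ - 8δ₀² + 8δ₀³ - 4δ₀⁴`, and `Δ ≥ 0` for `δ₀ > 1`, so `f±` are the roots of `q` and
`(1 - δ₀)(c - f₋)(c - f₊) = -q(c)`. Since `q` is convex with `q(-1) = -4δ₀` and
`q(1) = -2(2δ₀² - 2δ₀ + 1)²`, it is nonpositive on `[-1, 1]`.
-/

section Quadratic

variable {K : Type*} [Field K]

theorem mul_sub_quadratic_root_mul_sub_quadratic_root [NeZero (2 : K)] {a b c s : K}
    (ha : a ≠ 0) (h : discrim a b c = s * s) (x : K) :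
    a * (x - (-b - s) / (2 * a)) * (x - (-b + s) / (2 * a)) = a * (x * x) + b * x + c := by
  rw [discrim] at h
  field_simp
  linear_combination h

variable [LinearOrder K] [IsStrictOrderedRing K]

theorem quadratic_nonpos_of_mem_Icc {a b c x : K} (ha : 0 ≤ a) (hneg : a - b + c ≤ 0)
    (hpos : a + b + c ≤ 0) (hx : x ∈ Set.Icc (-1) 1) : a * (x * x) + b * x + c ≤ 0 := by
  obtain ⟨hx₁, hx₂⟩ := hx
  have hchord : a * (x * x) + b * x + c
      = ((1 + x) * (a + b + c) + (1 - x) * (a - b + c)) / 2 + a * ((x - 1) * (x + 1)) := by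
    ring
  rw [hchord]
  have h₁ : (1 + x) * (a + b + c) ≤ 0 := mul_nonpos_of_nonneg_of_nonpos (by linarith) hpos
  have h₂ : (1 - x) * (a - b + c) ≤ 0 := mul_nonpos_of_nonneg_of_nonpos (by linarith) hneg
  have h₃ : a * ((x - 1) * (x + 1)) ≤ 0 :=
    mul_nonpos_of_nonneg_of_nonpos ha (mul_nonpos_of_nonpos_of_nonneg (by linarith) (by linarith))
  linarith

end Quadratic

theorem discrim_sipg (δ₀ : ℝ) :
    discrim (δ₀ - 1) (-(1 - 6 * δ₀ + 8 * δ₀ ^ 2 - 8 * δ₀ ^ 3 + 4 * δ₀ ^ 4))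
        (δ₀ - 8 * δ₀ ^ 2 + 8 * δ₀ ^ 3 - 4 * δ₀ ^ 4) =
      1 - 8 * δ₀ + 16 * δ₀ ^ 2 - 48 * δ₀ ^ 3 + 120 * δ₀ ^ 4
        - 160 * δ₀ ^ 5 + 128 * δ₀ ^ 6 - 64 * δ₀ ^ 7 + 16 * δ₀ ^ 8 := by
  rw [discrim]
  ring

theorem discrim_sipg_nonneg {δ₀ : ℝ} (hδ : 1 < δ₀) :
    0 ≤ discrim (δ₀ - 1) (-(1 - 6 * δ₀ + 8 * δ₀ ^ 2 - 8 * δ₀ ^ 3 + 4 * δ₀ ^ 4))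
        (δ₀ - 8 * δ₀ ^ 2 + 8 * δ₀ ^ 3 - 4 * δ₀ ^ 4) := by
  have hcubic : 0 < 4 * δ₀ * ((δ₀ - 1) ^ 2 + 1) - 1 := by nlinarith [sq_nonneg (δ₀ - 1)]
  have hsplit : discrim (δ₀ - 1) (-(1 - 6 * δ₀ + 8 * δ₀ ^ 2 - 8 * δ₀ ^ 3 + 4 * δ₀ ^ 4))
        (δ₀ - 8 * δ₀ ^ 2 + 8 * δ₀ ^ 3 - 4 * δ₀ ^ 4) =
      (1 - 6 * δ₀ + 8 * δ₀ ^ 2 - 8 * δ₀ ^ 3 + 4 * δ₀ ^ 4) ^ 2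
        + 4 * δ₀ * (δ₀ - 1) * (4 * δ₀ * ((δ₀ - 1) ^ 2 + 1) - 1) := by
    rw [discrim]; ring
  rw [hsplit]
  have hδ₀ : 0 < δ₀ := by linarith
  have hδ₁ : 0 < δ₀ - 1 := by linarith
  positivity

theorem stmt_9 (δ₀ c : ℝ) (hδ : 1 < δ₀) (hc : c ∈ Set.Icc (-1 : ℝ) 1) :
    0 ≤ (c + 1) * (1 - δ₀) * (c - fMinusP δ₀) * (c - fPlusP δ₀) := by
  set N := 1 - 6 * δ₀ + 8 * δ₀ ^ 2 - 8 * δ₀ ^ 3 + 4 * δ₀ ^ 4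
  set C := δ₀ - 8 * δ₀ ^ 2 + 8 * δ₀ ^ 3 - 4 * δ₀ ^ 4
  set Δ := 1 - 8 * δ₀ + 16 * δ₀ ^ 2 - 48 * δ₀ ^ 3 + 120 * δ₀ ^ 4
    - 160 * δ₀ ^ 5 + 128 * δ₀ ^ 6 - 64 * δ₀ ^ 7 + 16 * δ₀ ^ 8
  have hdiscrim : discrim (δ₀ - 1) (-N) C = Δ := discrim_sipg δ₀
  have hs : discrim (δ₀ - 1) (-N) C = √Δ * √Δ := by
    rw [Real.mul_self_sqrt (hdiscrim ▸ discrim_sipg_nonneg hδ), hdiscrim]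
  have hminus : fMinusP δ₀ = (-(-N) - √Δ) / (2 * (δ₀ - 1)) := by rw [neg_neg]; rfl
  have hplus : fPlusP δ₀ = (-(-N) + √Δ) / (2 * (δ₀ - 1)) := by rw [neg_neg]; rfl
  have hfactor := mul_sub_quadratic_root_mul_sub_quadratic_root (sub_ne_zero.2 hδ.ne') hs c
  have hq : (δ₀ - 1) * (c * c) + -N * c + C ≤ 0 := by
    have hneg : δ₀ - 1 - -N + C = -4 * δ₀ := by ring
    have hpos : δ₀ - 1 + -N + C = -2 * (2 * δ₀ ^ 2 - 2 * δ₀ + 1) ^ 2 := by ring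
    refine quadratic_nonpos_of_mem_Icc (by linarith) ?_ ?_ hc
    · rw [hneg]; linarith
    · rw [hpos]; exact mul_nonpos_of_nonpos_of_nonneg (by norm_num) (sq_nonneg _)
  calc 0 ≤ (c + 1) * -((δ₀ - 1) * (c * c) + -N * c + C) :=
        mul_nonneg (by linarith [hc.1]) (neg_nonneg.2 hq)
    _ = (c + 1) * (1 - δ₀) * (c - fMinusP δ₀) * (c - fPlusP δ₀) := by
        rw [hminus, hplus, ← hfactor]; ring
end

section
/- Let λ±(c, α, δ₀) = 1 + α·(-1 + 8δ₀ - 10δ₀² - (2δ₀² - 4δ₀ + 1)c ± √((c+1)(1-δ₀)(c-f₋)(c-f₊)))/((2δ₀-1)(4δ₀ - c - 1)) with f± as in the point block-Jacobi analysis. Then the choice α = (2δ₀-1)²/(6δ₀²-6δ₀+1) satisfies λ₊(1, α, δ₀) = -λ₋(1, α, δ₀) for all δ₀ > 1. -/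
/-- Eigenvalue `λ₊` of the point block-Jacobi two-level iteration operator. -/
noncomputable def lambdaPlusP (c α δ₀ : ℝ) : ℝ :=
  1 + α * (-1 + 8 * δ₀ - 10 * δ₀ ^ 2 - (2 * δ₀ ^ 2 - 4 * δ₀ + 1) * c +
    Real.sqrt ((c + 1) * (1 - δ₀) * (c - fMinusP δ₀) * (c - fPlusP δ₀))) /
    ((2 * δ₀ - 1) * (4 * δ₀ - c - 1))

/-- Eigenvalue `λ₋`. -/
noncomputable def lambdaMinusP (c α δ₀ : ℝ) : ℝ :=
  1 + α * (-1 + 8 * δ₀ - 10 * δ₀ ^ 2 - (2 * δ₀ ^ 2 - 4 * δ₀ + 1) * c -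
    Real.sqrt ((c + 1) * (1 - δ₀) * (c - fMinusP δ₀) * (c - fPlusP δ₀))) /
    ((2 * δ₀ - 1) * (4 * δ₀ - c - 1))

/-! The square root cancels in `λ₊ + λ₋`, so `λ₊ = -λ₋` is a linear equation in `α`; at `c = 1`
it reads `α (6δ₀² - 6δ₀ + 1) = (2δ₀ - 1)²`. -/

theorem lambdaPlusP_add_lambdaMinusP (c α δ₀ : ℝ) :
    lambdaPlusP c α δ₀ + lambdaMinusP c α δ₀ =
      2 + 2 * α * (-1 + 8 * δ₀ - 10 * δ₀ ^ 2 - (2 * δ₀ ^ 2 - 4 * δ₀ + 1) * c) /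
        ((2 * δ₀ - 1) * (4 * δ₀ - c - 1)) := by
  unfold lambdaPlusP lambdaMinusP
  ring

theorem lambdaPlusP_add_lambdaMinusP_one (α δ₀ : ℝ) (hδ₀ : 2 * δ₀ - 1 ≠ 0) :
    lambdaPlusP 1 α δ₀ + lambdaMinusP 1 α δ₀ =
      2 * (1 - α * (6 * δ₀ ^ 2 - 6 * δ₀ + 1) / (2 * δ₀ - 1) ^ 2) := by
  rw [lambdaPlusP_add_lambdaMinusP]
  have hden : 4 * δ₀ - 1 - 1 = 2 * (2 * δ₀ - 1) := by ring
  rw [hden]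
  field_simp
  ring

theorem stmt_14 (δ₀ : ℝ) (h : 1 < δ₀) :
    lambdaPlusP 1 ((2 * δ₀ - 1) ^ 2 / (6 * δ₀ ^ 2 - 6 * δ₀ + 1)) δ₀
      = - lambdaMinusP 1 ((2 * δ₀ - 1) ^ 2 / (6 * δ₀ ^ 2 - 6 * δ₀ + 1)) δ₀ := by
  have hδ₀ : 2 * δ₀ - 1 ≠ 0 := by linarith
  have hq : 6 * δ₀ ^ 2 - 6 * δ₀ + 1 ≠ 0 := by nlinarith
  rw [eq_neg_iff_add_eq_zero, lambdaPlusP_add_lambdaMinusP_one _ _ hδ₀, div_mul_cancel₀ _ hq,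
    div_self (pow_ne_zero 2 hδ₀), sub_self, mul_zero]
end
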